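/- Let (x_j) be a bounded sequence in a real Banach space X having a weak*-cluster point G in X** with G ∉ X, and let d = dist(G, X). Set γ = max{1/d, (‖G‖ + d)/(2d), sup_j ‖x_j‖}. Then for every ε > 0, (x_j) has a subsequence which is (γ + ε)-wide-(s). -/

import Mathlib

open Finset Filter Metric NormedSpace

noncomputable section

universe u

variable {X Y : Type*} [NormedAddCommGroup X] [NormedSpace ℝ X]
  [NormedAddCommGroup Y] [NormedSpace ℝ Y]

/-- `b` is a `lam`-basic sequence: for all scalars `c` and all `k ≤ n`,
`‖∑_{j<k} c_j b_j‖ ≤ lam * ‖∑_{j<n} c_j b_j‖`. -/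
def IsBasicWith (lam : ℝ) (b : ℕ → X) : Prop :=
  ∀ (c : ℕ → ℝ) (k n : ℕ), k ≤ n →
    ‖∑ j ∈ Finset.range k, c j • b j‖ ≤ lam * ‖∑ j ∈ Finset.range n, c j • b j‖

/-- `b` is a `lam`-wide-(s) sequence: it is `2lam`-basic, `‖b j‖ ≤ lam` for all `j`,
and `|∑_{k≤j<n} c_j| ≤ lam * ‖∑_{j<n} c_j b_j‖` for all scalars and `k ≤ n`. -/
def IsWideSWith (lam : ℝ) (b : ℕ → X) : Prop :=
  IsBasicWith (2 * lam) b ∧ (∀ j, ‖b j‖ ≤ lam) ∧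
    ∀ (c : ℕ → ℝ) (k n : ℕ), k ≤ n →
      |∑ j ∈ Finset.Ico k n, c j| ≤ lam * ‖∑ j ∈ Finset.range n, c j • b j‖

/-- `G ∈ X**` is a weak*-cluster point of the sequence `x` in `X`, i.e. a cluster
point of the canonical images of the `x j` in the topology `σ(X**, X*)`. -/
def IsWeakStarClusterPt (G : StrongDual ℝ (StrongDual ℝ X)) (x : ℕ → X) : Prop :=
  MapClusterPt (StrongDual.toWeakDual G) Filter.atTop
    (fun j => StrongDual.toWeakDual (inclusionInDoubleDual ℝ X (x j)))


lemma lemA (G : StrongDual ℝ (StrongDual ℝ X)) (d : ℝ)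
    (hd : d = Metric.infDist G (Set.range (inclusionInDoubleDual ℝ X)))
    (V : Submodule ℝ X) [FiniteDimensional ℝ V] (η : ℝ) (hη : 0 < η) :
    ∃ f : StrongDual ℝ X, ‖f‖ ≤ 1 ∧ (∀ v ∈ V, f v = 0) ∧ d - η < G f := by
  by_contra hcon
  push_neg at hcon
  have h0 : (0:ℝ) ≤ d - η := by simpa using hcon 0 (by simp) (by simp)
  -- the annihilator of V
  set ann : Submodule ℝ (StrongDual ℝ X) :=
    { carrier := {f | ∀ v ∈ V, f v = 0}
      add_mem' := fun hf hg v hv => by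
        simp [hf v hv, hg v hv]
      zero_mem' := fun v hv => rfl
      smul_mem' := fun c f hf v hv => by simp [hf v hv] } with hann
  have hGf_le : ∀ f : StrongDual ℝ X, (∀ v ∈ V, f v = 0) → G f ≤ (d - η) * ‖f‖ := by
    intro f hf
    rcases eq_or_ne f 0 with rfl | hf0
    · simp
    · have hnorm : ‖‖f‖⁻¹ • f‖ ≤ 1 := by
        rw [norm_smul, norm_inv, norm_norm, inv_mul_cancel₀ (norm_ne_zero_iff.2 hf0)]
      have := hcon (‖f‖⁻¹ • f) hnorm (fun v hv => by simp [hf v hv])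
      have heq : G (‖f‖⁻¹ • f) = ‖f‖⁻¹ * G f := by simp
      rw [heq] at this
      have hfpos : (0:ℝ) < ‖f‖ := norm_pos_iff.2 hf0
      calc G f = ‖f‖ * (‖f‖⁻¹ * G f) := by field_simp
        _ ≤ ‖f‖ * (d - η) := by
            exact mul_le_mul_of_nonneg_left this hfpos.le
        _ = (d - η) * ‖f‖ := mul_comm _ _
  have habs : ∀ f : StrongDual ℝ X, (∀ v ∈ V, f v = 0) → |G f| ≤ (d - η) * ‖f‖ := by
    intro f hf
    rw [abs_le]
    constructor
    · have := hGf_le (-f) (fun v hv => by simp [hf v hv])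
      simp only [map_neg, norm_neg] at this
      linarith
    · exact hGf_le f hf
  -- restrict G to the annihilator and extend with small norm
  set φ : ann →L[ℝ] ℝ := G.comp ann.subtypeL with hφ
  have hφnorm := ContinuousLinearMap.opNorm_le_bound (𝕜 := ℝ) (𝕜₂ := ℝ) (F := ℝ)
      (σ₁₂ := RingHom.id ℝ) φ h0 fun f => (by
    have : φ f = G (f : StrongDual ℝ X) := rfl
    rw [Real.norm_eq_abs, this]
    exact habs _ f.2 : ‖φ f‖ ≤ (d - η) * ‖(f : StrongDual ℝ X)‖)
  obtain ⟨G₂, hext, hnorm2⟩ := exists_extension_norm_eq ann φ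
  set G₁ : StrongDual ℝ (StrongDual ℝ X) := G - G₂ with hG₁
  have hG₁ann : ∀ a : StrongDual ℝ X, (∀ v ∈ V, a v = 0) → G₁ a = 0 := by
    intro a ha
    have : G₂ a = φ ⟨a, ha⟩ := hext ⟨a, ha⟩
    simp [hG₁, this, hφ]
  -- a basis of V and extensions of its coordinate functionals
  set B := Module.finBasis ℝ V with hB
  have hgex : ∀ i, ∃ gi : StrongDual ℝ X, ∀ v : V, gi v = B.coord i v := by
    intro i
    obtain ⟨gi, hgi, -⟩ := exists_extension_norm_eq (V : Subspace ℝ X)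
      (LinearMap.toContinuousLinearMap (B.coord i))
    exact ⟨gi, fun v => by simpa using hgi v⟩
  choose g hg using hgex
  set v₀ : X := ∑ i, G₁ (g i) • (B i : X) with hv₀
  have hkey : ∀ f : StrongDual ℝ X, G₁ f = f v₀ := by
    intro f
    have hf' : ∀ v ∈ V, (f - ∑ i, f (B i : X) • g i) v = 0 := by
      intro v hv
      set vv : V := ⟨v, hv⟩ with hvv
      have hrepr : (vv : X) = ∑ i, B.repr vv i • (B i : X) := by
        conv_lhs => rw [← B.sum_repr vv]
        push_cast [Submodule.coe_sum]
        rfl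
      have hfv : f v = ∑ i, B.repr vv i * f (B i : X) := by
        conv_lhs => rw [show v = (vv : X) from rfl, hrepr]
        rw [map_sum]
        simp [smul_eq_mul]
      have hgv : ∀ i, g i v = B.repr vv i := by
        intro i
        have := hg i vv
        simpa [Module.Basis.coord_apply] using this
      have h3 : ∑ i, f (B i : X) * (g i) v = ∑ i, B.repr vv i * f (B i : X) :=
        Finset.sum_congr rfl fun i _ => by rw [hgv i]; ring
      simp only [ContinuousLinearMap.sub_apply, ContinuousLinearMap.sum_apply,
        ContinuousLinearMap.smul_apply, smul_eq_mul]
      rw [hfv, h3, sub_self]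
    have h1 : G₁ (f - ∑ i, f (B i : X) • g i) = 0 := hG₁ann _ hf'
    have h2 : G₁ f = ∑ i, f (B i : X) * G₁ (g i) := by
      have := h1
      rw [map_sub, sub_eq_zero] at this
      rw [this, map_sum]
      simp [smul_eq_mul]
    rw [h2, hv₀, map_sum]
    simp [smul_eq_mul]
    exact Finset.sum_congr rfl fun i _ => mul_comm _ _
  -- conclude
  have hGsub : G - inclusionInDoubleDual ℝ X v₀ = G₂ := by
    ext f
    have : inclusionInDoubleDual ℝ X v₀ f = f v₀ := rfl
    simp only [ContinuousLinearMap.sub_apply, this, ← hkey f, hG₁]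
    simp
  have hdle : d ≤ ‖G - inclusionInDoubleDual ℝ X v₀‖ := by
    rw [hd]
    exact (Metric.infDist_le_dist_of_mem (Set.mem_range_self v₀)).trans_eq (dist_eq_norm G _)
  rw [hGsub, hnorm2] at hdle
  have := hφnorm
  linarith

lemma lemB (W : Submodule ℝ X) [FiniteDimensional ℝ W] (δ : ℝ) (hδ : 0 < δ) :
    ∃ N : Finset (StrongDual ℝ X), (∀ g ∈ N, ‖g‖ ≤ 1) ∧
      ∀ w ∈ W, ∃ g ∈ N, (1 - δ) * ‖w‖ ≤ g w := by
  classical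
  set K : Set X := Subtype.val '' (Metric.sphere (0 : W) 1) with hK
  have hKcomp : IsCompact K := (isCompact_sphere (0 : W) 1).image continuous_subtype_val
  have hKnorm : ∀ u ∈ K, ‖u‖ = 1 := by
    rintro u ⟨v, hv, rfl⟩
    simpa using mem_sphere_zero_iff_norm.mp hv
  have hcover : K ⊆ ⋃ u : K, Metric.ball (u : X) δ := fun u hu =>
    Set.mem_iUnion.2 ⟨⟨u, hu⟩, Metric.mem_ball_self hδ⟩
  obtain ⟨t, ht⟩ := hKcomp.elim_finite_subcover (fun u : K => Metric.ball (u : X) δ)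
    (fun _ => Metric.isOpen_ball) hcover
  have hnf : ∀ u : K, ∃ g : StrongDual ℝ X, ‖g‖ = 1 ∧ g (u : X) = ‖(u : X)‖ := by
    intro u
    refine exists_dual_vector ℝ (u : X) ?_
    intro h
    have := hKnorm _ u.2
    rw [h] at this; simp at this
  choose nf hnf1 hnf2 using hnf
  refine ⟨insert 0 (t.image nf), ?_, ?_⟩
  · intro g hg
    rcases Finset.mem_insert.mp hg with rfl | hg
    · simp
    · obtain ⟨u, -, rfl⟩ := Finset.mem_image.mp hg
      exact (hnf1 u).le
  · intro w hw
    rcases eq_or_ne w 0 with rfl | hw0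
    · exact ⟨0, Finset.mem_insert_self _ _, by simp⟩
    · have hwn : (0:ℝ) < ‖w‖ := norm_pos_iff.2 hw0
      have huK : ‖w‖⁻¹ • w ∈ K := by
        refine ⟨‖w‖⁻¹ • (⟨w, hw⟩ : W), ?_, rfl⟩
        rw [mem_sphere_zero_iff_norm]
        have hcoe : ‖(‖w‖⁻¹ • (⟨w, hw⟩ : W) : W)‖ = ‖‖w‖⁻¹ • w‖ := rfl
        rw [hcoe, norm_smul, norm_inv, norm_norm, inv_mul_cancel₀ hwn.ne']
      obtain ⟨u, hut, hu⟩ : ∃ u : K, u ∈ t ∧ (‖w‖⁻¹ • w) ∈ Metric.ball (u : X) δ := by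
        have := ht huK
        simp only [Set.mem_iUnion] at this
        obtain ⟨u, hu1, hu2⟩ := this
        exact ⟨u, hu1, hu2⟩
      refine ⟨nf u, Finset.mem_insert_of_mem (Finset.mem_image_of_mem _ hut), ?_⟩
      have hgu : nf u (‖w‖⁻¹ • w) ≥ 1 - δ := by
        have hdist : ‖(‖w‖⁻¹ • w) - (u : X)‖ < δ := by
          rw [← dist_eq_norm]; exact Metric.mem_ball.mp hu
        have h1 : nf u (u : X) = 1 := by rw [hnf2 u, hKnorm _ u.2]
        have h2 : |nf u ((‖w‖⁻¹ • w) - (u : X))| ≤ δ := by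
          calc |nf u ((‖w‖⁻¹ • w) - (u : X))| ≤ ‖nf u‖ * ‖(‖w‖⁻¹ • w) - (u : X)‖ :=
                (nf u).le_opNorm _
            _ ≤ 1 * δ := by
                apply mul_le_mul (hnf1 u).le hdist.le (norm_nonneg _) zero_le_one
            _ = δ := one_mul δ
        have h3 : nf u (‖w‖⁻¹ • w) = 1 + nf u ((‖w‖⁻¹ • w) - (u : X)) := by
          rw [map_sub, h1]; ring
        rw [h3]
        have := abs_le.mp h2
        linarith [this.1]
      have hgw : nf u w = ‖w‖ * nf u (‖w‖⁻¹ • w) := by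
        rw [map_smul, smul_eq_mul]
        field_simp
      rw [hgw, mul_comm (1 - δ) ‖w‖]
      exact mul_le_mul_of_nonneg_left hgu hwn.le

lemma lemC {G : StrongDual ℝ (StrongDual ℝ X)} {x : ℕ → X} (hG : IsWeakStarClusterPt G x)
    (F : Finset (StrongDual ℝ X)) (δ : ℝ) (hδ : 0 < δ) (N : ℕ) :
    ∃ n, N < n ∧ ∀ f ∈ F, |f (x n) - G f| ≤ δ := by
  classical
  set U : Set (WeakDual ℝ (StrongDual ℝ X)) :=
    ⋂ f ∈ F, {H : WeakDual ℝ (StrongDual ℝ X) | |H f - G f| < δ} with hU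
  have hUopen : IsOpen U := by
    refine isOpen_biInter_finset fun f _ => ?_
    have : {H : WeakDual ℝ (StrongDual ℝ X) | |H f - G f| < δ} =
        (fun H : WeakDual ℝ (StrongDual ℝ X) => H f) ⁻¹' (Metric.ball (G f) δ) := by
      ext H; simp [Metric.mem_ball, Real.dist_eq]
    rw [this]
    exact (WeakDual.eval_continuous f).isOpen_preimage _ Metric.isOpen_ball
  have hGU : (StrongDual.toWeakDual G) ∈ U := by
    simp only [hU, Set.mem_iInter]
    intro f _
    simp [hδ]
  have := (mapClusterPt_iff_frequently.mp hG) U (hUopen.mem_nhds hGU)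
  obtain ⟨n, hn, hmem⟩ := (frequently_atTop.mp this) (N + 1)
  refine ⟨n, by omega, fun f hf => ?_⟩
  have := Set.mem_iInter₂.mp hmem f hf
  simpa using this.le


set_option maxHeartbeats 2000000 in
/-- if a bounded sequence `(x j)` has a weak*-cluster point
`G ∈ X** \ X`, `d = dist(G, X)`, and
`γ = max {1/d, (‖G‖+d)/(2d), sup_j ‖x j‖}`, then for every `ε > 0` the sequence
`(x j)` has a `(γ + ε)`-wide-(s) subsequence. -/
theorem stmt_11 [CompleteSpace X] (x : ℕ → X) (hx : Bornology.IsBounded (Set.range x))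
    (G : StrongDual ℝ (StrongDual ℝ X)) (hG : IsWeakStarClusterPt G x)
    (hGX : G ∉ Set.range (inclusionInDoubleDual ℝ X))
    (d γ : ℝ) (hd : d = Metric.infDist G (Set.range (inclusionInDoubleDual ℝ X)))
    (hγ : γ = max (max (1 / d) ((‖G‖ + d) / (2 * d))) (⨆ j, ‖x j‖))
    (ε : ℝ) (hε : 0 < ε) :
    ∃ s : ℕ → ℕ, StrictMono s ∧ IsWideSWith (γ + ε) (fun j => x (s j)) := by
  classical
  -- d > 0
  have hiso : Isometry (inclusionInDoubleDual ℝ X) :=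
    (inclusionInDoubleDualLi ℝ (E := X)).isometry
  have hclosed : IsClosed (Set.range (inclusionInDoubleDual ℝ X)) :=
    hiso.isClosedEmbedding.isClosed_range
  have hdd : 0 < d := by
    rw [hd]
    exact (hclosed.notMem_iff_infDist_pos ⟨_, Set.mem_range_self 0⟩).mp hGX
  -- γ bounds
  have hγ1 : 1 / d ≤ γ := hγ ▸ le_max_of_le_left (le_max_left _ _)
  have hγ2 : (‖G‖ + d) / (2 * d) ≤ γ := hγ ▸ le_max_of_le_left (le_max_right _ _)
  have hbdd : BddAbove (Set.range fun j => ‖x j‖) := by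
    obtain ⟨C, hC⟩ := (isBounded_iff_forall_norm_le.mp hx)
    exact ⟨C, by rintro r ⟨j, rfl⟩; exact hC _ (Set.mem_range_self j)⟩
  have hγ3 : ∀ j, ‖x j‖ ≤ γ := fun j =>
    le_trans (le_ciSup hbdd j) (hγ ▸ le_max_right _ _)
  have hγpos : 0 < γ := lt_of_lt_of_le (by positivity) hγ1
  -- choose the small parameter c0
  obtain ⟨c0, hc0pos, hc0lt1, hc05d, hc0iii, hc0iv⟩ :
      ∃ c0 : ℝ, 0 < c0 ∧ c0 < 1 ∧ 5 * c0 < d ∧ 1 / (d - 5 * c0) ≤ 1 / d + ε ∧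
        1 + (‖G‖ + 4 * c0) / (d - 5 * c0) ≤ (1 - c0) * (1 + ‖G‖ / d + 2 * ε) := by
    have h1 : ∀ᶠ t : ℝ in nhds 0, t < 1 :=
      (tendsto_id (x := nhds (0:ℝ))).eventually_lt_const one_pos
    have h2 : ∀ᶠ t : ℝ in nhds 0, 5 * t < d := by
      have : Tendsto (fun t : ℝ => 5 * t) (nhds 0) (nhds (5 * 0)) :=
        (continuous_const.mul continuous_id).tendsto 0
      simpa using this.eventually_lt_const (by simpa using hdd)
    have hden : Tendsto (fun t : ℝ => d - 5 * t) (nhds 0) (nhds d) := by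
      have : Tendsto (fun t : ℝ => d - 5 * t) (nhds 0) (nhds (d - 5 * 0)) :=
        (continuous_const.sub (continuous_const.mul continuous_id)).tendsto 0
      simpa using this
    have h3 : ∀ᶠ t : ℝ in nhds 0, 1 / (d - 5 * t) < 1 / d + ε := by
      have : Tendsto (fun t : ℝ => 1 / (d - 5 * t)) (nhds 0) (nhds (1 / d)) := by
        exact (tendsto_const_nhds.div hden hdd.ne')
      exact this.eventually_lt_const (by linarith)
    have h4 : ∀ᶠ t : ℝ in nhds 0,
        1 + (‖G‖ + 4 * t) / (d - 5 * t) < (1 - t) * (1 + ‖G‖ / d + 2 * ε) := by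
      have hL : Tendsto (fun t : ℝ => 1 + (‖G‖ + 4 * t) / (d - 5 * t)) (nhds 0)
          (nhds (1 + ‖G‖ / d)) := by
        have hnum : Tendsto (fun t : ℝ => ‖G‖ + 4 * t) (nhds 0) (nhds ‖G‖) := by
          have : Tendsto (fun t : ℝ => ‖G‖ + 4 * t) (nhds 0) (nhds (‖G‖ + 4 * 0)) :=
            (continuous_const.add (continuous_const.mul continuous_id)).tendsto 0
          simpa using this
        exact tendsto_const_nhds.add (hnum.div hden hdd.ne')
      have hR : Tendsto (fun t : ℝ => (1 - t) * (1 + ‖G‖ / d + 2 * ε)) (nhds 0)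
          (nhds (1 + ‖G‖ / d + 2 * ε)) := by
        have : Tendsto (fun t : ℝ => (1 - t) * (1 + ‖G‖ / d + 2 * ε)) (nhds 0)
            (nhds ((1 - 0) * (1 + ‖G‖ / d + 2 * ε))) :=
          ((continuous_const.sub continuous_id).mul continuous_const).tendsto 0
        simpa using this
      exact hL.eventually_lt hR (by linarith)
    have hall : ∀ᶠ t : ℝ in nhdsWithin 0 (Set.Ioi 0),
        ((t < 1 ∧ 5 * t < d) ∧ 1 / (d - 5 * t) < 1 / d + ε) ∧
          1 + (‖G‖ + 4 * t) / (d - 5 * t) < (1 - t) * (1 + ‖G‖ / d + 2 * ε) :=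
      Eventually.filter_mono (nhdsWithin_le_nhds (s := Set.Ioi (0:ℝ)))
        (((h1.and h2).and h3).and h4)
    have hex := (hall.and (eventually_mem_nhdsWithin
      (s := Set.Ioi (0:ℝ)) (a := (0:ℝ)))).exists
    obtain ⟨t, ⟨⟨⟨ht1, ht2⟩, ht3⟩, ht4⟩, ht5⟩ := hex
    exact ⟨t, ht5, ht1, ht2, ht3.le, ht4.le⟩
  -- dyadic parameters
  set δs : ℕ → ℝ := fun k => c0 / 2 ^ k with hδs
  have hδspos : ∀ k, 0 < δs k := fun k => by
    rw [hδs]; positivity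
  have hδsle : ∀ k, δs k ≤ c0 := fun k =>
    div_le_self hc0pos.le (one_le_pow₀ one_le_two)
  have hgeom : ∀ n, ∑ j ∈ Finset.range n, δs j ≤ 2 * c0 := by
    intro n
    have h1 : ∀ j, δs j = c0 * (1/2 : ℝ)^j := by
      intro j
      rw [hδs]
      rw [div_pow, one_pow]
      field_simp
    calc ∑ j ∈ Finset.range n, δs j = c0 * ∑ j ∈ Finset.range n, (1/2 : ℝ)^j := by
          rw [Finset.mul_sum]; exact Finset.sum_congr rfl fun j _ => h1 j
      _ ≤ c0 * 2 := mul_le_mul_of_nonneg_left (sum_geometric_two_le n) hc0pos.le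
      _ = 2 * c0 := mul_comm _ _
  -- choice functions depending only on finite prefixes
  set tr : ℕ → (ℕ → ℕ) → (ℕ → ℕ) := fun k s j => if j < k then s j else 0 with htr
  have hAex : ∀ (k : ℕ) (s : ℕ → ℕ), ∃ f : StrongDual ℝ X, ‖f‖ ≤ 1 ∧
      (∀ j, j < k → f (x (s j)) = 0) ∧ d - δs k < G f := by
    intro k s
    have hfin : ((fun j => x (s j)) '' Set.Iio k).Finite := (Set.finite_Iio k).image _
    haveI := FiniteDimensional.span_of_finite ℝ hfin
    obtain ⟨f, h1, h2, h3⟩ := lemA G d hd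
      (Submodule.span ℝ ((fun j => x (s j)) '' Set.Iio k)) (δs k) (hδspos k)
    exact ⟨f, h1, fun j hj => h2 _ (Submodule.subset_span ⟨j, hj, rfl⟩), h3⟩
  choose F0 hF01 hF02 hF03 using hAex
  set ffun : ℕ → (ℕ → ℕ) → StrongDual ℝ X := fun k s => F0 k (tr k s) with hffun
  have ffun_congr : ∀ (k : ℕ) (s t : ℕ → ℕ), (∀ i, i < k → s i = t i) →
      ffun k s = ffun k t := by
    intro k s t h
    have : tr k s = tr k t := by
      funext j
      simp only [htr]
      split
      · next hj => exact h j hj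
      · rfl
    rw [hffun]
    simp only
    rw [this]
  have hffun1 : ∀ k s, ‖ffun k s‖ ≤ 1 := fun k s => hF01 _ _
  have hffun2 : ∀ k (s : ℕ → ℕ) j, j < k → ffun k s (x (s j)) = 0 := by
    intro k s j hj
    have h := hF02 k (tr k s) j hj
    rw [hffun]
    simp only
    have : tr k s j = s j := by simp [htr, hj]
    rw [this] at h
    exact h
  have hffun3 : ∀ k s, d - δs k < G (ffun k s) := fun k s => hF03 _ _
  have hBex : ∀ (k : ℕ) (s : ℕ → ℕ), ∃ N : Finset (StrongDual ℝ X), (∀ g ∈ N, ‖g‖ ≤ 1) ∧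
      ∀ w ∈ Submodule.span ℝ ((fun j => x (s j)) '' Set.Iic k),
        ∃ g ∈ N, (1 - c0) * ‖w‖ ≤ g w := by
    intro k s
    have hfin : ((fun j => x (s j)) '' Set.Iic k).Finite := (Set.finite_Iic k).image _
    haveI := FiniteDimensional.span_of_finite ℝ hfin
    exact lemB _ c0 hc0pos
  choose N0 hN01 hN02 using hBex
  set net : ℕ → (ℕ → ℕ) → Finset (StrongDual ℝ X) := fun k s => N0 k (tr (k+1) s) with hnet
  have net_congr : ∀ (k : ℕ) (s t : ℕ → ℕ), (∀ i, i < k + 1 → s i = t i) →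
      net k s = net k t := by
    intro k s t h
    have : tr (k+1) s = tr (k+1) t := by
      funext j
      simp only [htr]
      split
      · next hj => exact h j hj
      · rfl
    rw [hnet]
    simp only
    rw [this]
  have hnet1 : ∀ k (s : ℕ → ℕ) g, g ∈ net k s → ‖g‖ ≤ 1 := fun k s g hg => hN01 _ _ g hg
  have hnet2 : ∀ k (s : ℕ → ℕ) w, w ∈ Submodule.span ℝ ((fun j => x (s j)) '' Set.Iic k) →
      ∃ g ∈ net k s, (1 - c0) * ‖w‖ ≤ g w := by
    intro k s w hw
    have himg : (fun j => x (tr (k+1) s j)) '' Set.Iic k = (fun j => x (s j)) '' Set.Iic k := by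
      apply Set.image_congr
      intro j hj
      have : j < k + 1 := Nat.lt_succ_of_le hj
      simp [htr, this]
    have := hN02 k (tr (k+1) s) w (by rw [himg]; exact hw)
    exact this
  -- the family of functionals to approximate at step j
  set Fam : (ℕ → ℕ) → ℕ → Finset (StrongDual ℝ X) := fun s j =>
    ((Finset.range (j+1)).image fun i => ffun i s) ∪
      ((Finset.range j).biUnion fun i => net i s) with hFam
  have fam_congr : ∀ (s t : ℕ → ℕ) (j : ℕ), (∀ i, i < j → s i = t i) →
      Fam s j = Fam t j := by
    intro s t j h
    rw [hFam]
    simp only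
    congr 1
    · apply Finset.image_congr
      intro i hi
      simp only [Finset.coe_range, Set.mem_Iio] at hi
      exact ffun_congr i s t fun m hm => h m (by omega)
    · apply Finset.biUnion_congr rfl
      intro i hi
      rw [Finset.mem_range] at hi
      exact net_congr i s t fun m hm => h m (by omega)
  have hstepex : ∀ (j : ℕ) (s : ℕ → ℕ) (N : ℕ), ∃ n, N < n ∧
      ∀ h ∈ Fam s j, |h (x n) - G h| ≤ δs j :=
    fun j s N => lemC hG (Fam s j) (δs j) (hδspos j) N
  choose pick pick_gt pick_cond using hstepex
  -- recursive construction of the subsequence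
  set pref : ℕ → (ℕ → ℕ) := fun k => Nat.rec (motive := fun _ => ℕ → ℕ)
    (fun _ => pick 0 (fun _ => 0) 0)
    (fun k ih => Function.update ih (k+1) (pick (k+1) ih (ih k))) k with hpref
  set s : ℕ → ℕ := fun k => pref k k with hsdef
  have hprefS : ∀ k, pref (k+1) =
      Function.update (pref k) (k+1) (pick (k+1) (pref k) (pref k k)) := fun k => rfl
  have hpref_stab : ∀ k j, j ≤ k → pref k j = s j := by
    have hstep1 : ∀ k j, j ≤ k → pref (k+1) j = pref k j := by
      intro k j hj
      rw [hprefS k]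
      exact Function.update_of_ne (by omega) _ _
    have key : ∀ i k j, j ≤ k → pref (k+i) j = pref k j := by
      intro i
      induction i with
      | zero => intro k j hj; rfl
      | succ i ih =>
        intro k j hj
        rw [show k + (i+1) = (k+i)+1 by omega, hstep1 (k+i) j (by omega), ih k j hj]
    intro k j hj
    rw [hsdef]
    simp only
    have h2 := key (k - j) j j le_rfl
    rw [show j + (k - j) = k by omega] at h2
    exact h2
  have hs_succ : ∀ k, s (k+1) = pick (k+1) (pref k) (pref k k) := by
    intro k
    rw [hsdef]
    simp only
    rw [hprefS k]
    exact Function.update_self _ _ _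
  have hsmono : StrictMono s := by
    apply strictMono_nat_of_lt_succ
    intro k
    rw [hs_succ k]
    have h1 := pick_gt (k+1) (pref k) (pref k k)
    have h2 : pref k k = s k := hpref_stab k k le_rfl
    omega
  have hcond : ∀ j, ∀ h ∈ Fam s j, |h (x (s j)) - G h| ≤ δs j := by
    intro j
    cases j with
    | zero =>
      have h0 : s 0 = pick 0 (fun _ => 0) 0 := rfl
      have hfam : Fam s 0 = Fam (fun _ => 0) 0 := fam_congr _ _ 0 (by omega)
      intro h hh
      rw [hfam] at hh
      rw [h0]
      exact pick_cond 0 (fun _ => 0) 0 h hh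
    | succ k =>
      have hfam : Fam s (k+1) = Fam (pref k) (k+1) :=
        fam_congr s (pref k) (k+1) fun i hi => (hpref_stab k i (by omega)).symm
      intro h hh
      rw [hfam] at hh
      rw [hs_succ k]
      exact pick_cond (k+1) (pref k) (pref k k) h hh
  -- properties of the selected subsequence
  set b : ℕ → X := fun j => x (s j) with hb
  have hfb0 : ∀ k j, j < k → ffun k s (b j) = 0 := fun k j hj => hffun2 k s j hj
  have hfd : ∀ k, d - c0 < G (ffun k s) := fun k =>
    lt_of_le_of_lt (by linarith [hδsle k]) (hffun3 k s)
  have happf : ∀ k j, k ≤ j → |ffun k s (b j) - G (ffun k s)| ≤ δs j := by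
    intro k j hkj
    refine hcond j (ffun k s) ?_
    rw [hFam]
    exact Finset.mem_union_left _ (Finset.mem_image.2 ⟨k, Finset.mem_range.2 (by omega), rfl⟩)
  have happN : ∀ i j g, i < j → g ∈ net i s → |g (b j) - G g| ≤ δs j := by
    intro i j g hij hg
    refine hcond j g ?_
    rw [hFam]
    exact Finset.mem_union_right _ (Finset.mem_biUnion.2 ⟨i, Finset.mem_range.2 hij, hg⟩)
  have hd5 : 0 < d - 5 * c0 := by linarith
  -- the key quantitative estimate
  have keyM : ∀ (n : ℕ) (c : ℕ → ℝ) (k : ℕ), k ≤ n →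
      (d - 5 * c0) * |∑ j ∈ Finset.Ico k n, c j| ≤ ‖∑ j ∈ Finset.range n, c j • b j‖ := by
    intro n c k hk
    set S := ∑ j ∈ Finset.range n, c j • b j with hS
    set A : ℕ → ℝ := fun m => ∑ j ∈ Finset.Ico m n, c j with hA
    have hne : (Finset.range (n+1)).Nonempty := ⟨0, Finset.mem_range.2 (by omega)⟩
    set M := (Finset.range (n+1)).sup' hne (fun m => |A m|) with hM
    have hMle : ∀ m, m ≤ n → |A m| ≤ M := by
      intro m hm
      exact Finset.le_sup' (f := fun m => |A m|) (Finset.mem_range.2 (Nat.lt_succ_of_le hm))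
    have hM0 : 0 ≤ M := le_trans (abs_nonneg _) (hMle k hk)
    have hcj : ∀ j, j < n → |c j| ≤ 2 * M := by
      intro j hj
      have hsplit : A j = c j + A (j+1) := Finset.sum_eq_sum_Ico_succ_bot hj _
      have h1 : |A j| ≤ M := hMle j (by omega)
      have h2 : |A (j+1)| ≤ M := hMle (j+1) (by omega)
      have hcj' : c j = A j - A (j+1) := by linarith
      rw [hcj']
      calc |A j - A (j+1)| ≤ |A j| + |A (j+1)| := abs_sub _ _
        _ ≤ 2 * M := by linarith
    suffices hMS : (d - 5 * c0) * M ≤ ‖S‖ by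
      calc (d - 5*c0) * |A k| ≤ (d - 5*c0) * M :=
            mul_le_mul_of_nonneg_left (hMle k hk) (by linarith)
        _ ≤ ‖S‖ := hMS
    obtain ⟨k₀, hk₀mem, hk₀⟩ := Finset.exists_mem_eq_sup' hne (fun m => |A m|)
    have hk₀n : k₀ ≤ n := by
      have := Finset.mem_range.mp hk₀mem
      omega
    rcases eq_or_lt_of_le hk₀n with rfl | hk₀lt
    · have hz : A k₀ = 0 := by rw [hA]; simp
      rw [hM, hk₀, hz]
      simp [norm_nonneg]
    · set f := ffun k₀ s with hf
      have hfS : f S = ∑ j ∈ Finset.Ico k₀ n, c j * f (b j) := by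
        rw [hS, map_sum]
        rw [Finset.sum_congr rfl (fun j _ => by
          rw [map_smul, smul_eq_mul] : ∀ j ∈ Finset.range n, f (c j • b j) = c j * f (b j))]
        rw [Finset.range_eq_Ico, ← Finset.sum_Ico_consecutive _ (Nat.zero_le k₀) hk₀n]
        have hzero : ∀ j ∈ Finset.Ico 0 k₀, c j * f (b j) = 0 := by
          intro j hj
          have : j < k₀ := (Finset.mem_Ico.mp hj).2
          rw [hf, hfb0 k₀ j this, mul_zero]
        rw [Finset.sum_eq_zero hzero, zero_add]
      set t := G f with ht
      have herr : |f S - t * A k₀| ≤ 4 * c0 * M := by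
        have heq : f S - t * A k₀ = ∑ j ∈ Finset.Ico k₀ n, c j * (f (b j) - t) := by
          rw [hfS, hA]
          simp only
          rw [Finset.mul_sum, ← Finset.sum_sub_distrib]
          exact Finset.sum_congr rfl fun j _ => by ring
        rw [heq]
        calc |∑ j ∈ Finset.Ico k₀ n, c j * (f (b j) - t)|
            ≤ ∑ j ∈ Finset.Ico k₀ n, |c j * (f (b j) - t)| :=
              Finset.abs_sum_le_sum_abs _ _
          _ ≤ ∑ j ∈ Finset.Ico k₀ n, (2*M) * δs j := by
              apply Finset.sum_le_sum
              intro j hj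
              obtain ⟨hj1, hj2⟩ := Finset.mem_Ico.mp hj
              rw [abs_mul]
              exact mul_le_mul (hcj j hj2) (happf k₀ j hj1) (abs_nonneg _) (by linarith)
          _ = (2*M) * ∑ j ∈ Finset.Ico k₀ n, δs j := by rw [Finset.mul_sum]
          _ ≤ (2*M) * (2*c0) := by
              apply mul_le_mul_of_nonneg_left _ (by linarith)
              calc ∑ j ∈ Finset.Ico k₀ n, δs j ≤ ∑ j ∈ Finset.range n, δs j := by
                    rw [Finset.range_eq_Ico]
                    exact Finset.sum_le_sum_of_subset_of_nonneg
                      (Finset.Ico_subset_Ico (Nat.zero_le _) le_rfl)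
                      (fun j _ _ => (hδspos j).le)
                _ ≤ 2 * c0 := hgeom n
          _ = 4 * c0 * M := by ring
      have htd : d - c0 < t := hfd k₀
      have hfSle : |f S| ≤ ‖S‖ := by
        calc |f S| ≤ ‖f‖ * ‖S‖ := f.le_opNorm S
          _ ≤ 1 * ‖S‖ := mul_le_mul_of_nonneg_right (hffun1 k₀ s) (norm_nonneg _)
          _ = ‖S‖ := one_mul _
    -- combine the estimates
      have habs : |t * A k₀| ≤ ‖S‖ + 4 * c0 * M := by
        calc |t * A k₀| = |f S - (f S - t * A k₀)| := by ring_nf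
          _ ≤ |f S| + |f S - t * A k₀| := abs_sub _ _
          _ ≤ ‖S‖ + 4 * c0 * M := add_le_add hfSle herr
      have hMk : M = |A k₀| := hk₀
      have h5 : (d - c0) * M ≤ |t * A k₀| := by
        rw [abs_mul, hMk]
        apply mul_le_mul_of_nonneg_right _ (abs_nonneg _)
        calc d - c0 ≤ t := htd.le
          _ ≤ |t| := le_abs_self t
      rw [hMk]
      rw [← hMk]
      linarith
  -- the lower ℓ¹-estimate (wide-(s) condition (c))
  have hγε : 0 < γ + ε := by linarith
  have propC : ∀ (c : ℕ → ℝ) (k n : ℕ), k ≤ n →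
      |∑ j ∈ Finset.Ico k n, c j| ≤ (γ + ε) * ‖∑ j ∈ Finset.range n, c j • b j‖ := by
    intro c k n hkn
    have h1 := keyM n c k hkn
    set S := ∑ j ∈ Finset.range n, c j • b j with hS
    have h2 : |∑ j ∈ Finset.Ico k n, c j| ≤ ‖S‖ * (1 / (d - 5*c0)) := by
      rw [mul_one_div, le_div_iff₀ hd5, mul_comm]
      exact h1
    calc |∑ j ∈ Finset.Ico k n, c j| ≤ ‖S‖ * (1 / (d - 5*c0)) := h2
      _ ≤ ‖S‖ * (1/d + ε) := mul_le_mul_of_nonneg_left hc0iii (norm_nonneg _)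
      _ ≤ ‖S‖ * (γ + ε) := by
          apply mul_le_mul_of_nonneg_left _ (norm_nonneg _)
          linarith
      _ = (γ + ε) * ‖S‖ := mul_comm _ _
  -- the basic-sequence estimate (wide-(s) condition (a))
  have propA : ∀ (c : ℕ → ℝ) (k n : ℕ), k ≤ n →
      ‖∑ j ∈ Finset.range k, c j • b j‖ ≤ 2 * (γ + ε) * ‖∑ j ∈ Finset.range n, c j • b j‖ := by
    intro c k n hkn
    set S := ∑ j ∈ Finset.range n, c j • b j with hS
    have hSnn : (0:ℝ) ≤ ‖S‖ := norm_nonneg _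
    cases k with
    | zero =>
      simp only [Finset.range_zero, Finset.sum_empty, norm_zero]
      positivity
    | succ m =>
    set P := ∑ j ∈ Finset.range (m+1), c j • b j with hP
    have hPmem : P ∈ Submodule.span ℝ ((fun j => x (s j)) '' Set.Iic m) := by
      apply Submodule.sum_mem
      intro j hj
      have hjm : j ≤ m := by
        have := Finset.mem_range.mp hj
        omega
      exact Submodule.smul_mem _ _ (Submodule.subset_span ⟨j, hjm, rfl⟩)
    obtain ⟨g, hgmem, hgP⟩ := hnet2 m s P hPmem
    have hgnorm := hnet1 m s g hgmem
    -- decompose g S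
    have hgS : g P = g S - ∑ j ∈ Finset.Ico (m+1) n, c j * g (b j) := by
      have h1 : g S = ∑ j ∈ Finset.range n, c j * g (b j) := by
        rw [hS, map_sum]
        exact Finset.sum_congr rfl fun j _ => by rw [map_smul, smul_eq_mul]
      have h2 : g P = ∑ j ∈ Finset.range (m+1), c j * g (b j) := by
        rw [hP, map_sum]
        exact Finset.sum_congr rfl fun j _ => by rw [map_smul, smul_eq_mul]
      rw [h1, h2]
      rw [show Finset.range n = Finset.Ico 0 n from Finset.range_eq_Ico n,
        show Finset.range (m+1) = Finset.Ico 0 (m+1) from Finset.range_eq_Ico (m+1)]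
      rw [← Finset.sum_Ico_consecutive (fun j => c j * g (b j)) (Nat.zero_le (m+1)) hkn]
      ring
    set Q : ℝ := ‖S‖ / (d - 5*c0) with hQ
    have hQnn : 0 ≤ Q := by positivity
    have hAbound : ∀ i, i ≤ n → |∑ j ∈ Finset.Ico i n, c j| ≤ Q := by
      intro i hi
      rw [hQ, le_div_iff₀ hd5, mul_comm]
      exact keyM n c i hi
    have hcb : ∀ j, j < n → |c j| ≤ 2 * Q := by
      intro j hj
      have hsplit : (∑ i ∈ Finset.Ico j n, c i) = c j + ∑ i ∈ Finset.Ico (j+1) n, c i :=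
        Finset.sum_eq_sum_Ico_succ_bot hj _
      have h1 := hAbound j (by omega)
      have h2 := hAbound (j+1) (by omega)
      have hcj' : c j = (∑ i ∈ Finset.Ico j n, c i) - ∑ i ∈ Finset.Ico (j+1) n, c i := by
        linarith
      rw [hcj']
      calc |(∑ i ∈ Finset.Ico j n, c i) - ∑ i ∈ Finset.Ico (j+1) n, c i|
          ≤ |∑ i ∈ Finset.Ico j n, c i| + |∑ i ∈ Finset.Ico (j+1) n, c i| := abs_sub _ _
        _ ≤ 2 * Q := by linarith
    have herr : |∑ j ∈ Finset.Ico (m+1) n, c j * (g (b j) - G g)| ≤ 4 * c0 * Q := by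
      calc |∑ j ∈ Finset.Ico (m+1) n, c j * (g (b j) - G g)|
          ≤ ∑ j ∈ Finset.Ico (m+1) n, |c j * (g (b j) - G g)| :=
            Finset.abs_sum_le_sum_abs _ _
        _ ≤ ∑ j ∈ Finset.Ico (m+1) n, (2*Q) * δs j := by
            apply Finset.sum_le_sum
            intro j hj
            obtain ⟨hj1, hj2⟩ := Finset.mem_Ico.mp hj
            rw [abs_mul]
            exact mul_le_mul (hcb j hj2) (happN m j g (by omega) hgmem)
              (abs_nonneg _) (by linarith)
        _ = (2*Q) * ∑ j ∈ Finset.Ico (m+1) n, δs j := by rw [Finset.mul_sum]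
        _ ≤ (2*Q) * (2*c0) := by
            apply mul_le_mul_of_nonneg_left _ (by linarith)
            calc ∑ j ∈ Finset.Ico (m+1) n, δs j ≤ ∑ j ∈ Finset.range n, δs j := by
                  rw [Finset.range_eq_Ico]
                  exact Finset.sum_le_sum_of_subset_of_nonneg
                    (Finset.Ico_subset_Ico (Nat.zero_le _) le_rfl)
                    (fun j _ _ => (hδspos j).le)
              _ ≤ 2 * c0 := hgeom n
        _ = 4 * c0 * Q := by ring
    have hsum2 : ∑ j ∈ Finset.Ico (m+1) n, c j * g (b j) =
        G g * (∑ j ∈ Finset.Ico (m+1) n, c j) +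
          ∑ j ∈ Finset.Ico (m+1) n, c j * (g (b j) - G g) := by
      rw [Finset.mul_sum, ← Finset.sum_add_distrib]
      exact Finset.sum_congr rfl fun j _ => by ring
    have hgSle : |g S| ≤ ‖S‖ := by
      calc |g S| ≤ ‖g‖ * ‖S‖ := g.le_opNorm S
        _ ≤ 1 * ‖S‖ := mul_le_mul_of_nonneg_right hgnorm (norm_nonneg _)
        _ = ‖S‖ := one_mul _
    have hGg : |G g| ≤ ‖G‖ := by
      calc |G g| ≤ ‖G‖ * ‖g‖ := G.le_opNorm g
        _ ≤ ‖G‖ * 1 := mul_le_mul_of_nonneg_left hgnorm (norm_nonneg G)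
        _ = ‖G‖ := mul_one _
    have hA1 : |∑ j ∈ Finset.Ico (m+1) n, c j| ≤ Q := hAbound (m+1) hkn
    have hGA : |G g * (∑ j ∈ Finset.Ico (m+1) n, c j)| ≤ ‖G‖ * Q := by
      rw [abs_mul]
      exact mul_le_mul hGg hA1 (abs_nonneg _) (norm_nonneg G)
    -- combine
    have hmain : (1 - c0) * ‖P‖ ≤ ‖S‖ + ‖G‖ * Q + 4 * c0 * Q := by
      have h0 : (1 - c0) * ‖P‖ ≤ g P := hgP
      rw [hgS, hsum2] at h0
      have e1 : g S ≤ ‖S‖ := le_trans (le_abs_self _) hgSle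
      have e2 : -(G g * (∑ j ∈ Finset.Ico (m+1) n, c j)) ≤ ‖G‖ * Q :=
        le_trans (neg_le_abs _) hGA
      have e3 : -(∑ j ∈ Finset.Ico (m+1) n, c j * (g (b j) - G g)) ≤ 4 * c0 * Q :=
        le_trans (neg_le_abs _) herr
      linarith
    -- final algebra
    have hQeq : ‖G‖ * Q + 4 * c0 * Q = ‖S‖ * ((‖G‖ + 4*c0) / (d - 5*c0)) := by
      rw [hQ]
      field_simp
    have hfin1 : (1 - c0) * ‖P‖ ≤ ‖S‖ * (1 + (‖G‖ + 4*c0) / (d - 5*c0)) := by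
      rw [mul_add, mul_one]
      linarith [hQeq]
    have hγ2' : ‖G‖ + d ≤ γ * (2 * d) := (div_le_iff₀ (by linarith)).mp hγ2
    have hcmp : 1 + ‖G‖ / d + 2 * ε ≤ 2 * (γ + ε) := by
      have hGd : ‖G‖ / d ≤ 2 * γ - 1 := by
        rw [div_le_iff₀ hdd]
        nlinarith
      linarith
    have hfin2 : ‖S‖ * (1 + (‖G‖ + 4*c0) / (d - 5*c0)) ≤
        ‖S‖ * ((1 - c0) * (2 * (γ + ε))) := by
      apply mul_le_mul_of_nonneg_left _ hSnn
      calc 1 + (‖G‖ + 4*c0) / (d - 5*c0) ≤ (1 - c0) * (1 + ‖G‖ / d + 2 * ε) := hc0iv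
        _ ≤ (1 - c0) * (2 * (γ + ε)) :=
            mul_le_mul_of_nonneg_left hcmp (by linarith)
    have hfin3 : (1 - c0) * ‖P‖ ≤ (1 - c0) * (2 * (γ + ε) * ‖S‖) := by
      calc (1 - c0) * ‖P‖ ≤ ‖S‖ * ((1 - c0) * (2 * (γ + ε))) := le_trans hfin1 hfin2
        _ = (1 - c0) * (2 * (γ + ε) * ‖S‖) := by ring
    have h1c0 : (0:ℝ) < 1 - c0 := by linarith
    exact le_of_mul_le_mul_left hfin3 h1c0
  have propB : ∀ j, ‖b j‖ ≤ γ + ε := fun j => le_trans (hγ3 (s j)) (by linarith)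
  exact ⟨s, hsmono, propA, propB, propC⟩
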